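/- Let σ : [0,1]² → (0,∞) be continuous, and for each n let V_n be the n×n matrix with entries (V_n)_{ij} = (1/n) σ(i/n, j/n)². Let 𝐕 be the bounded linear operator on the Banach space C([0,1]) of continuous real-valued functions on [0,1] defined by (𝐕f)(x) = ∫_0^1 σ(x,y)² f(y) dy. Then the spectral radius ρ(V_n) of the matrix V_n converges, as n → ∞, to the spectral radius ρ(𝐕) of the operator 𝐕. -/

import Mathlib

open MeasureTheory Filter

noncomputable def specRad {n : ℕ} (V : Matrix (Fin n) (Fin n) ℝ) : ℝ :=
  sSup {r : ℝ | ∃ μ : ℂ, r = ‖μ‖ ∧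
    Module.End.HasEigenvalue (Matrix.toLin' (V.map (fun x : ℝ => (x : ℂ)))) μ}

/-!
Write `K = σ²`, `f_k = 𝐕^k 1` and `u_k = V_n^k 1`. Both operators are positive, so
`‖𝐕^k‖ = ‖f_k‖`, and Gelfand's formula for the `ℓ^∞` operator norm gives
`ρ(V_n) = lim_k ‖u_k‖^{1/k}`. As `K` is uniformly continuous and bounded below on the square,
for every `η > 0` and all large `n` the sample `n (V_n)_{ij} = K((i+1)/n, (j+1)/n)` lies within a
factor `1 ± η` of `K` on the cell `[i/n, (i+1)/n] × [j/n, (j+1)/n]`. Integrating cell by cell,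
induction on `k` gives `(1-η)^k f_k(x) ≤ u_k(i) ≤ (1+η)^k f_k(x)` for `x` in the `i`-th cell,
and taking `k`-th roots, `(1-η) ρ(𝐕) ≤ ρ(V_n) ≤ (1+η) ρ(𝐕)`.
-/

open Set Topology Matrix
open scoped NNReal ENNReal

attribute [local instance] Matrix.linftyOpNormedAddCommGroup Matrix.linftyOpNormedRing
  Matrix.linftyOpNormedAlgebra

theorem mul_le_mul_of_tendsto_rpow_one_div {x y : ℕ → ℝ} {A B c d : ℝ}
    (hx : Tendsto (fun k : ℕ => x k ^ (1 / k : ℝ)) atTop (𝓝 A))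
    (hy : Tendsto (fun k : ℕ => y k ^ (1 / k : ℝ)) atTop (𝓝 B))
    (hx0 : ∀ k, 0 ≤ x k) (hy0 : ∀ k, 0 ≤ y k) (hc : 0 ≤ c) (hd : 0 ≤ d)
    (h : ∀ k, c ^ k * x k ≤ d ^ k * y k) : c * A ≤ d * B := by
  refine le_of_tendsto_of_tendsto (hx.const_mul c) (hy.const_mul d) ?_
  filter_upwards [eventually_ne_atTop 0] with k hk
  have root_pow_mul : ∀ e z : ℝ, 0 ≤ e → 0 ≤ z → e * z ^ (1 / k : ℝ) = (e ^ k * z) ^ (1 / k : ℝ) :=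
    fun e z he hz => by
      rw [Real.mul_rpow (by positivity) hz, one_div, Real.pow_rpow_inv_natCast he hk]
  rw [root_pow_mul c _ hc (hx0 k), root_pow_mul d _ hd (hy0 k)]
  exact Real.rpow_le_rpow (mul_nonneg (pow_nonneg hc k) (hx0 k)) (h k) (by positivity)

theorem tendsto_of_forall_eventually_one_sub_mul_le_le_one_add_mul {α : Type*} {l : Filter α}
    {x : α → ℝ} {ρ : ℝ}
    (h : ∀ η, 0 < η → η < 1 → ∀ᶠ n in l, (1 - η) * ρ ≤ x n ∧ x n ≤ (1 + η) * ρ) :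
    Tendsto x l (𝓝 ρ) := by
  refine Metric.tendsto_nhds.2 fun ε hε => ?_
  set η := ε / (ε + |ρ| + 1)
  have hη : 0 < η := by positivity
  have hη1 : η < 1 := (div_lt_one (by positivity)).2 (by linarith [abs_nonneg ρ])
  have hηρ : η * |ρ| < ε := by
    rw [div_mul_eq_mul_div, div_lt_iff₀ (by positivity)]
    nlinarith [abs_nonneg ρ]
  filter_upwards [h η hη hη1] with n ⟨hlo, hhi⟩
  have hηρ_le : η * ρ ≤ η * |ρ| := mul_le_mul_of_nonneg_left (le_abs_self ρ) hη.le
  rw [Real.dist_eq, abs_sub_lt_iff]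
  constructor <;> linarith

theorem IsCompact.exists_dist_lt_imp_one_sub_mul_le_le_one_add_mul {α : Type*}
    [PseudoMetricSpace α] {s : Set α} {f : α → ℝ} (hs : IsCompact s) (hf : ContinuousOn f s)
    (hpos : ∀ p ∈ s, 0 < f p) {η : ℝ} (hη : 0 < η) :
    ∃ δ > 0, ∀ p ∈ s, ∀ q ∈ s, dist p q < δ → (1 - η) * f q ≤ f p ∧ f p ≤ (1 + η) * f q := by
  obtain ⟨m, hm, hmf⟩ := hs.exists_forall_le' hf hpos
  obtain ⟨δ, hδ, hclose⟩ := Metric.uniformContinuousOn_iff.1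
    (hs.uniformContinuousOn_of_continuous hf) (η * m) (by positivity)
  refine ⟨δ, hδ, fun p hp q hq hpq => ?_⟩
  have hfpq := abs_sub_lt_iff.1 (hclose p hp q hq hpq)
  have hmq := hmf q hq
  constructor <;> nlinarith

theorem ContinuousLinearMap.monotone_of_integral_kernel {X : Type*} [TopologicalSpace X]
    [MeasureSpace X] {K : X → X → ℝ} (hK : ∀ x y, 0 ≤ K x y) {S : C(X, ℝ) →L[ℝ] C(X, ℝ)}
    (hS : ∀ f x, S f x = ∫ y, K x y * f y) : Monotone S :=
  (monotone_iff_map_nonneg S).2 fun f hf => ContinuousMap.le_def.2 fun x => by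
    simpa [hS] using integral_nonneg fun y => mul_nonneg (hK x y) (ContinuousMap.le_def.1 hf y)

theorem ContinuousLinearMap.monotone_pow {R M : Type*} [Semiring R] [TopologicalSpace M]
    [AddCommMonoid M] [Module R M] [Preorder M] {S : M →L[R] M} (hS : Monotone S) (k : ℕ) :
    Monotone ⇑(S ^ k) :=
  FunLike.coe_pow_eq_iterate S k ▸ hS.iterate k

theorem ContinuousLinearMap.norm_eq_norm_apply_one_of_monotone {X : Type*} [TopologicalSpace X]
    [CompactSpace X] {S : C(X, ℝ) →L[ℝ] C(X, ℝ)} (hS : Monotone S) : ‖S‖ = ‖S 1‖ := by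
  refine le_antisymm (S.opNorm_le_bound (norm_nonneg _) fun g => ?_) ?_
  · have hg : -(‖g‖ • 1) ≤ g ∧ g ≤ ‖g‖ • 1 :=
      ⟨ContinuousMap.le_def.2 fun x => by simpa using neg_le_of_abs_le (g.norm_coe_le_norm x),
        ContinuousMap.le_def.2 fun x => by simpa using le_of_abs_le (g.norm_coe_le_norm x)⟩
    have hSg := And.intro (hS hg.1) (hS hg.2)
    simp only [map_neg, map_smul, ContinuousMap.le_def] at hSg
    refine (ContinuousMap.norm_le _ (by positivity)).2 fun x => ?_
    calc ‖S g x‖ ≤ ‖g‖ * S 1 x := abs_le.2 ⟨by simpa using hSg.1 x, by simpa using hSg.2 x⟩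
      _ ≤ ‖S 1‖ * ‖g‖ := by
        rw [mul_comm]; gcongr; exact (le_abs_self _).trans ((S 1).norm_coe_le_norm x)
  · calc ‖S 1‖ ≤ ‖S‖ * ‖(1 : C(X, ℝ))‖ := S.le_opNorm 1
      _ ≤ ‖S‖ := mul_le_of_le_one_right (norm_nonneg S)
          ((ContinuousMap.norm_le _ zero_le_one).2 fun _ => by simp)

theorem Matrix.mulVec_nonneg {m n R : Type*} [Fintype n] [Semiring R] [PartialOrder R]
    [IsOrderedRing R] {M : Matrix m n R} (hM : ∀ i j, 0 ≤ M i j) {v : n → R} (hv : 0 ≤ v) :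
    0 ≤ M *ᵥ v :=
  fun i => Finset.sum_nonneg fun j _ => mul_nonneg (hM i j) (hv j)

theorem Matrix.linfty_opNorm_eq_norm_mulVec_one {m n : Type*} [Fintype m] [Fintype n]
    {M : Matrix m n ℝ} (hM : ∀ i j, 0 ≤ M i j) : ‖M‖ = ‖M *ᵥ 1‖ := by
  rw [linfty_opNorm_def, Pi.norm_def]
  congr 2 with i
  simp [mulVec, dotProduct, Real.norm_of_nonneg (Finset.sum_nonneg fun j _ => hM i j),
    Real.norm_of_nonneg (hM i _)]

theorem Matrix.linfty_opNorm_map_ofReal {m n : Type*} [Fintype m] [Fintype n]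
    (M : Matrix m n ℝ) : ‖M.map ((↑) : ℝ → ℂ)‖ = ‖M‖ := by
  simp [linfty_opNorm_def]

theorem specRad_eq_toReal_spectralRadius {n : ℕ} [NeZero n] (V : Matrix (Fin n) (Fin n) ℝ) :
    specRad V = (spectralRadius ℂ (V.map ((↑) : ℝ → ℂ))).toReal := by
  set A := V.map ((↑) : ℝ → ℂ)
  have : CompleteSpace (Matrix (Fin n) (Fin n) ℂ) := FiniteDimensional.complete ℂ _
  obtain ⟨z, hz, hzA⟩ := spectrum.exists_nnnorm_eq_spectralRadius A
  have hset : {r : ℝ | ∃ μ : ℂ, r = ‖μ‖ ∧ Module.End.HasEigenvalue (toLin' A) μ} =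
      (‖·‖) '' spectrum ℂ A := by
    ext r
    simp [Module.End.hasEigenvalue_iff_mem_spectrum, spectrum_toLin', eq_comm, and_comm]
  have hgreatest : IsGreatest ((‖·‖) '' spectrum ℂ A) ‖z‖ := by
    refine ⟨mem_image_of_mem _ hz, ?_⟩
    rintro _ ⟨μ, hμ, rfl⟩
    have : (‖μ‖₊ : ℝ≥0∞) ≤ ‖z‖₊ :=
      hzA ▸ le_iSup₂ (f := fun μ (_ : μ ∈ spectrum ℂ A) => (‖μ‖₊ : ℝ≥0∞)) μ hμ
    exact_mod_cast this
  rw [specRad, hset, hgreatest.csSup_eq, ← hzA]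
  rfl

theorem tendsto_norm_pow_mulVec_one_rpow_specRad {n : ℕ} [NeZero n]
    {V : Matrix (Fin n) (Fin n) ℝ} (hV : ∀ i j, 0 ≤ V i j) :
    Tendsto (fun k : ℕ => ‖(V ^ k) *ᵥ 1‖ ^ (1 / k : ℝ)) atTop (𝓝 (specRad V)) := by
  have : CompleteSpace (Matrix (Fin n) (Fin n) ℂ) := FiniteDimensional.complete ℂ _
  set A := V.map ((↑) : ℝ → ℂ)
  have hgelfand := spectrum.pow_norm_pow_one_div_tendsto_nhds_spectralRadius A
  obtain ⟨z, -, hzA⟩ := spectrum.exists_nnnorm_eq_spectralRadius A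
  rw [specRad_eq_toReal_spectralRadius]
  refine ((ENNReal.tendsto_toReal (hzA ▸ ENNReal.coe_ne_top)).comp hgelfand).congr fun k => ?_
  have hpow : A ^ k = (V ^ k).map ((↑) : ℝ → ℂ) := (Matrix.map_pow V Complex.ofRealHom k).symm
  simp only [Function.comp_apply, hpow, Matrix.linfty_opNorm_map_ofReal,
    Matrix.linfty_opNorm_eq_norm_mulVec_one (Matrix.pow_apply_nonneg hV k)]
  exact ENNReal.toReal_ofReal (by positivity)

def gridCell (n i : ℕ) : Set ℝ := Icc (i / n) ((i + 1) / n)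

theorem right_mem_gridCell (n i : ℕ) : ((i + 1) / n : ℝ) ∈ gridCell n i :=
  ⟨by gcongr; linarith, le_rfl⟩

theorem gridCell_subset_Icc {n i : ℕ} (hi : i < n) : gridCell n i ⊆ Icc 0 1 := by
  have hn : (0 : ℝ) < n := by exact_mod_cast (Nat.zero_le i).trans_lt hi
  refine Icc_subset_Icc (by positivity) ((div_le_one hn).2 ?_)
  exact_mod_cast hi

theorem dist_le_of_mem_gridCell {n i : ℕ} {x y : ℝ} (hx : x ∈ gridCell n i)
    (hy : y ∈ gridCell n i) : dist x y ≤ 1 / n :=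
  (Real.dist_le_of_mem_Icc hx hy).trans_eq (by ring)

theorem exists_mem_gridCell {n : ℕ} (hn : n ≠ 0) {x : ℝ} (hx : x ∈ Icc (0 : ℝ) 1) :
    ∃ i : Fin n, x ∈ gridCell n i := by
  have hn' : (0 : ℝ) < n := by positivity
  rcases hx.2.lt_or_eq with hx1 | rfl
  · have hlt : ⌊n * x⌋₊ < n := (Nat.floor_lt (by nlinarith [hx.1])).2 (by nlinarith)
    refine ⟨⟨⌊n * x⌋₊, hlt⟩, ?_⟩
    simp only [gridCell, mem_Icc, div_le_iff₀ hn', le_div_iff₀ hn']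
    exact ⟨by linarith [Nat.floor_le (by nlinarith [hx.1] : 0 ≤ n * x)],
      by linarith [Nat.lt_floor_add_one (n * x)]⟩
  · refine ⟨⟨n - 1, Nat.sub_lt (Nat.pos_of_ne_zero hn) one_pos⟩, ?_⟩
    have : ((n - 1 : ℕ) : ℝ) + 1 = n := by
      rw [Nat.cast_sub (Nat.one_le_iff_ne_zero.2 hn)]; ring
    simp only [gridCell, this, div_self hn'.ne']
    exact ⟨(div_le_one hn').2 (by exact_mod_cast Nat.sub_le n 1), le_rfl⟩

theorem integral_unitInterval_eq_intervalIntegral {E : Type*} [NormedAddCommGroup E]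
    [NormedSpace ℝ E] (g : ℝ → E) : ∫ y : Icc (0 : ℝ) 1, g y = ∫ y in (0 : ℝ)..1, g y := by
  rw [integral_subtype measurableSet_Icc, integral_Icc_eq_integral_Ioc,
    intervalIntegral.integral_of_le zero_le_one]

theorem IntervalIntegrable.mono_gridCell {f : ℝ → ℝ} (hf : IntervalIntegrable f volume 0 1)
    {n j : ℕ} (hj : j < n) : IntervalIntegrable f volume (j / n : ℝ) ((j + 1) / n) := by
  refine hf.mono_set ?_
  rw [uIcc_of_le zero_le_one, uIcc_of_le (right_mem_gridCell n j).1]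
  exact gridCell_subset_Icc hj

theorem intervalIntegral_eq_sum_gridCell {f : ℝ → ℝ} (hf : IntervalIntegrable f volume 0 1)
    {n : ℕ} (hn : n ≠ 0) :
    ∫ y in (0 : ℝ)..1, f y = ∑ j : Fin n, ∫ y in (j / n : ℝ)..((j + 1) / n), f y := by
  have hn' : (0 : ℝ) < n := by positivity
  have hsub : ∀ j < n, IntervalIntegrable f volume (j / n : ℝ) (((j + 1 : ℕ) : ℝ) / n) :=
    fun j hj => by push_cast; exact hf.mono_gridCell hj
  have hsum := intervalIntegral.sum_integral_adjacent_intervals (a := fun j : ℕ => (j / n : ℝ)) hsub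
  simp only [Nat.cast_zero, zero_div, div_self hn'.ne', Nat.cast_succ] at hsum
  rw [← hsum, Fin.sum_univ_eq_sum_range (fun j => ∫ y in (j / n : ℝ)..((j + 1) / n), f y)]

theorem intervalIntegral_le_sum_of_forall_gridCell_le {f : ℝ → ℝ}
    (hf : IntervalIntegrable f volume 0 1) {n : ℕ} (hn : n ≠ 0) {w : Fin n → ℝ}
    (h : ∀ j : Fin n, ∀ y ∈ gridCell n j, f y ≤ n * w j) :
    ∫ y in (0 : ℝ)..1, f y ≤ ∑ j, w j := by
  rw [intervalIntegral_eq_sum_gridCell hf hn]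
  gcongr with j
  calc ∫ y in (j / n : ℝ)..((j + 1) / n), f y ≤ ∫ y in (j / n : ℝ)..((j + 1) / n), n * w j :=
        intervalIntegral.integral_mono_on (right_mem_gridCell n j).1 (hf.mono_gridCell j.2)
          intervalIntegrable_const (h j)
    _ = w j := by
        rw [intervalIntegral.integral_const, smul_eq_mul]
        field_simp
        ring

theorem sum_le_intervalIntegral_of_forall_gridCell_le {f : ℝ → ℝ}
    (hf : IntervalIntegrable f volume 0 1) {n : ℕ} (hn : n ≠ 0) {w : Fin n → ℝ}
    (h : ∀ j : Fin n, ∀ y ∈ gridCell n j, n * w j ≤ f y) :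
    ∑ j, w j ≤ ∫ y in (0 : ℝ)..1, f y := by
  have := intervalIntegral_le_sum_of_forall_gridCell_le hf.neg hn (w := fun j => -w j)
    fun j y hy => by simpa using h j y hy
  simpa [intervalIntegral.integral_neg, Finset.sum_neg_distrib] using this

section KernelComparison

variable {K : ℝ → ℝ → ℝ} {T : C(Icc (0 : ℝ) 1, ℝ) →L[ℝ] C(Icc (0 : ℝ) 1, ℝ)} {n : ℕ}
  {V : Matrix (Fin n) (Fin n) ℝ} {a b : ℝ}

theorem apply_eq_intervalIntegral_iccExtend
    (hT : ∀ f x, T f x = ∫ y : Icc (0 : ℝ) 1, K x y * f y) (f : C(Icc (0 : ℝ) 1, ℝ))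
    {x : ℝ} (hx : x ∈ Icc (0 : ℝ) 1) :
    T f ⟨x, hx⟩ = ∫ y in (0 : ℝ)..1, K x y * IccExtend zero_le_one f y := by
  rw [hT, ← integral_unitInterval_eq_intervalIntegral]
  simp only [IccExtend_val]

theorem intervalIntegrable_mul_iccExtend
    (hKc : ∀ x ∈ Icc (0 : ℝ) 1, ContinuousOn (K x) (Icc 0 1)) (f : C(Icc (0 : ℝ) 1, ℝ))
    {x : ℝ} (hx : x ∈ Icc (0 : ℝ) 1) :
    IntervalIntegrable (fun y => K x y * IccExtend zero_le_one f y) volume 0 1 :=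
  ContinuousOn.intervalIntegrable (by
    rw [uIcc_of_le zero_le_one]
    exact (hKc x hx).mul f.continuous.Icc_extend'.continuousOn)

theorem pow_apply_one_nonneg (hT : ∀ f x, T f x = ∫ y : Icc (0 : ℝ) 1, K x y * f y)
    (hK0 : ∀ x y : Icc (0 : ℝ) 1, 0 ≤ K x y) (k : ℕ) : 0 ≤ (T ^ k) 1 := by
  simpa using ContinuousLinearMap.monotone_pow
    (ContinuousLinearMap.monotone_of_integral_kernel hK0 hT) k zero_le_one

theorem mul_mul_iccExtend_apply_le_mulVec
    (hT : ∀ f x, T f x = ∫ y : Icc (0 : ℝ) 1, K x y * f y)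
    (hKc : ∀ x ∈ Icc (0 : ℝ) 1, ContinuousOn (K x) (Icc 0 1)) (hn : n ≠ 0)
    (hV0 : ∀ i j, 0 ≤ V i j)
    (hVK : ∀ i j : Fin n, ∀ x ∈ gridCell n i, ∀ y ∈ gridCell n j, a * K x y ≤ n * V i j)
    {f : C(Icc (0 : ℝ) 1, ℝ)} (hf : 0 ≤ f) {c : ℝ} (hc : 0 ≤ c) {u : Fin n → ℝ}
    (hfu : ∀ j : Fin n, ∀ y ∈ gridCell n j, c * IccExtend zero_le_one f y ≤ u j)
    (i : Fin n) {x : ℝ} (hx : x ∈ gridCell n i) :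
    a * c * IccExtend zero_le_one (T f) x ≤ (V *ᵥ u) i := by
  have hxI := gridCell_subset_Icc i.2 hx
  rw [IccExtend_of_mem _ _ hxI, apply_eq_intervalIntegral_iccExtend hT f hxI,
    ← intervalIntegral.integral_const_mul]
  refine intervalIntegral_le_sum_of_forall_gridCell_le
    ((intervalIntegrable_mul_iccExtend hKc f hxI).const_mul _) hn fun j y hy => ?_
  calc a * c * (K x y * IccExtend zero_le_one f y)
      = (a * K x y) * (c * IccExtend zero_le_one f y) := by ring
    _ ≤ (n * V i j) * u j :=
        mul_le_mul (hVK i j x hx y hy) (hfu j y hy)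
          (mul_nonneg hc (ContinuousMap.le_def.1 hf _)) (by positivity [hV0 i j])
    _ = n * (V i j * u j) := by ring

theorem mulVec_le_mul_mul_iccExtend_apply
    (hT : ∀ f x, T f x = ∫ y : Icc (0 : ℝ) 1, K x y * f y)
    (hKc : ∀ x ∈ Icc (0 : ℝ) 1, ContinuousOn (K x) (Icc 0 1)) (hn : n ≠ 0)
    (hV0 : ∀ i j, 0 ≤ V i j)
    (hVK : ∀ i j : Fin n, ∀ x ∈ gridCell n i, ∀ y ∈ gridCell n j, n * V i j ≤ b * K x y)
    {f : C(Icc (0 : ℝ) 1, ℝ)} {c : ℝ} {u : Fin n → ℝ} (hu : 0 ≤ u)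
    (hfu : ∀ j : Fin n, ∀ y ∈ gridCell n j, u j ≤ c * IccExtend zero_le_one f y)
    (i : Fin n) {x : ℝ} (hx : x ∈ gridCell n i) :
    (V *ᵥ u) i ≤ b * c * IccExtend zero_le_one (T f) x := by
  have hxI := gridCell_subset_Icc i.2 hx
  rw [IccExtend_of_mem _ _ hxI, apply_eq_intervalIntegral_iccExtend hT f hxI,
    ← intervalIntegral.integral_const_mul]
  refine sum_le_intervalIntegral_of_forall_gridCell_le
    ((intervalIntegrable_mul_iccExtend hKc f hxI).const_mul _) hn fun j y hy => ?_
  have hnV : 0 ≤ n * V i j := by positivity [hV0 i j]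
  calc n * (V i j * u j) = (n * V i j) * u j := by ring
    _ ≤ (b * K x y) * (c * IccExtend zero_le_one f y) :=
        mul_le_mul (hVK i j x hx y hy) (hfu j y hy) (hu j) (hnV.trans (hVK i j x hx y hy))
    _ = b * c * (K x y * IccExtend zero_le_one f y) := by ring

theorem pow_mul_iccExtend_pow_apply_one_le_pow_mulVec_one
    (hT : ∀ f x, T f x = ∫ y : Icc (0 : ℝ) 1, K x y * f y)
    (hK0 : ∀ x y : Icc (0 : ℝ) 1, 0 ≤ K x y)
    (hKc : ∀ x ∈ Icc (0 : ℝ) 1, ContinuousOn (K x) (Icc 0 1)) (hn : n ≠ 0)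
    (hV0 : ∀ i j, 0 ≤ V i j) (ha : 0 ≤ a)
    (hVK : ∀ i j : Fin n, ∀ x ∈ gridCell n i, ∀ y ∈ gridCell n j, a * K x y ≤ n * V i j)
    (k : ℕ) (i : Fin n) {x : ℝ} (hx : x ∈ gridCell n i) :
    a ^ k * IccExtend zero_le_one ((T ^ k) 1) x ≤ (V ^ k *ᵥ 1) i := by
  induction k generalizing i x with
  | zero => simp [IccExtend]
  | succ k ih =>
    simp only [pow_succ', mul_apply_eq_comp, ← mulVec_mulVec]
    exact mul_mul_iccExtend_apply_le_mulVec hT hKc hn hV0 hVK (pow_apply_one_nonneg hT hK0 k)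
      (pow_nonneg ha k) (fun j y hy => ih j hy) i hx

theorem pow_mulVec_one_le_pow_mul_iccExtend_pow_apply_one
    (hT : ∀ f x, T f x = ∫ y : Icc (0 : ℝ) 1, K x y * f y)
    (hKc : ∀ x ∈ Icc (0 : ℝ) 1, ContinuousOn (K x) (Icc 0 1)) (hn : n ≠ 0)
    (hV0 : ∀ i j, 0 ≤ V i j)
    (hVK : ∀ i j : Fin n, ∀ x ∈ gridCell n i, ∀ y ∈ gridCell n j, n * V i j ≤ b * K x y)
    (k : ℕ) (i : Fin n) {x : ℝ} (hx : x ∈ gridCell n i) :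
    (V ^ k *ᵥ 1) i ≤ b ^ k * IccExtend zero_le_one ((T ^ k) 1) x := by
  induction k generalizing i x with
  | zero => simp [IccExtend]
  | succ k ih =>
    simp only [pow_succ', mul_apply_eq_comp, ← mulVec_mulVec]
    exact mulVec_le_mul_mul_iccExtend_apply hT hKc hn hV0 hVK
      (mulVec_nonneg (pow_apply_nonneg hV0 k) zero_le_one) (fun j y hy => ih j hy) i hx

theorem pow_mul_norm_pow_apply_one_le_norm_pow_mulVec_one
    (hT : ∀ f x, T f x = ∫ y : Icc (0 : ℝ) 1, K x y * f y)
    (hK0 : ∀ x y : Icc (0 : ℝ) 1, 0 ≤ K x y)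
    (hKc : ∀ x ∈ Icc (0 : ℝ) 1, ContinuousOn (K x) (Icc 0 1)) (hn : n ≠ 0)
    (hV0 : ∀ i j, 0 ≤ V i j) (ha : 0 ≤ a)
    (hVK : ∀ i j : Fin n, ∀ x ∈ gridCell n i, ∀ y ∈ gridCell n j, a * K x y ≤ n * V i j)
    (k : ℕ) : a ^ k * ‖(T ^ k) 1‖ ≤ ‖V ^ k *ᵥ 1‖ := by
  have hf0 := pow_apply_one_nonneg hT hK0 k
  rw [← Real.norm_of_nonneg (pow_nonneg ha k), ← norm_smul]
  refine (ContinuousMap.norm_le _ (norm_nonneg _)).2 fun x => ?_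
  obtain ⟨i, hi⟩ := exists_mem_gridCell hn x.2
  have hxi := pow_mul_iccExtend_pow_apply_one_le_pow_mulVec_one hT hK0 hKc hn hV0 ha hVK k i hi
  rw [IccExtend_val] at hxi
  rw [ContinuousMap.smul_apply, smul_eq_mul,
    Real.norm_of_nonneg (mul_nonneg (pow_nonneg ha k) (ContinuousMap.le_def.1 hf0 x))]
  exact hxi.trans ((Real.le_norm_self _).trans (norm_le_pi_norm _ i))

theorem norm_pow_mulVec_one_le_pow_mul_norm_pow_apply_one
    (hT : ∀ f x, T f x = ∫ y : Icc (0 : ℝ) 1, K x y * f y)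
    (hKc : ∀ x ∈ Icc (0 : ℝ) 1, ContinuousOn (K x) (Icc 0 1)) (hn : n ≠ 0)
    (hV0 : ∀ i j, 0 ≤ V i j) (hb : 0 ≤ b)
    (hVK : ∀ i j : Fin n, ∀ x ∈ gridCell n i, ∀ y ∈ gridCell n j, n * V i j ≤ b * K x y)
    (k : ℕ) : ‖V ^ k *ᵥ 1‖ ≤ b ^ k * ‖(T ^ k) 1‖ := by
  refine (pi_norm_le_iff_of_nonneg (by positivity)).2 fun i => ?_
  have hxi := pow_mulVec_one_le_pow_mul_iccExtend_pow_apply_one hT hKc hn hV0 hVK k i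
    (right_mem_gridCell n i)
  rw [IccExtend_of_mem _ _ (gridCell_subset_Icc i.2 (right_mem_gridCell n i))] at hxi
  rw [Real.norm_of_nonneg (mulVec_nonneg (pow_apply_nonneg hV0 k) zero_le_one i)]
  exact hxi.trans (mul_le_mul_of_nonneg_left
    ((Real.le_norm_self _).trans (ContinuousMap.norm_coe_le_norm _ _)) (pow_nonneg hb k))

theorem mul_le_specRad_and_specRad_le_mul [NeZero n]
    (hT : ∀ f x, T f x = ∫ y : Icc (0 : ℝ) 1, K x y * f y)
    (hK0 : ∀ x y : Icc (0 : ℝ) 1, 0 ≤ K x y)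
    (hKc : ∀ x ∈ Icc (0 : ℝ) 1, ContinuousOn (K x) (Icc 0 1))
    (hV0 : ∀ i j, 0 ≤ V i j) (ha : 0 ≤ a) (hb : 0 ≤ b)
    (hVK : ∀ i j : Fin n, ∀ x ∈ gridCell n i, ∀ y ∈ gridCell n j,
      a * K x y ≤ n * V i j ∧ n * V i j ≤ b * K x y)
    {ρ : ℝ} (hρ : Tendsto (fun k : ℕ => ‖T ^ k‖ ^ (1 / k : ℝ)) atTop (𝓝 ρ)) :
    a * ρ ≤ specRad V ∧ specRad V ≤ b * ρ := by
  have hnorm : ∀ k, ‖T ^ k‖ = ‖(T ^ k) 1‖ := fun k =>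
    ContinuousLinearMap.norm_eq_norm_apply_one_of_monotone
      (ContinuousLinearMap.monotone_pow (ContinuousLinearMap.monotone_of_integral_kernel hK0 hT) k)
  have hV := tendsto_norm_pow_mulVec_one_rpow_specRad hV0
  constructor
  · simpa using mul_le_mul_of_tendsto_rpow_one_div hρ hV (fun k => norm_nonneg (T ^ k))
      (fun _ => norm_nonneg _) ha zero_le_one fun k => by
        simpa [hnorm] using pow_mul_norm_pow_apply_one_le_norm_pow_mulVec_one hT hK0 hKc
          (NeZero.ne n) hV0 ha (fun i j x hx y hy => (hVK i j x hx y hy).1) k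
  · simpa using mul_le_mul_of_tendsto_rpow_one_div hV hρ (fun _ => norm_nonneg _)
      (fun k => norm_nonneg (T ^ k)) zero_le_one hb fun k => by
        simpa [hnorm] using norm_pow_mulVec_one_le_pow_mul_norm_pow_apply_one hT hKc
          (NeZero.ne n) hV0 hb (fun i j x hx y hy => (hVK i j x hx y hy).2) k

end KernelComparison

/-- For a continuous positive `σ : [0,1]² → (0,∞)`, the spectral radii of the sampled
matrices `V_n = ((1/n) σ(i/n, j/n)²)` converge, as `n → ∞`, to the spectral radius
`ρ(𝐕) = lim_k ‖𝐕^k‖^{1/k}` of the integral operator `(𝐕f)(x) = ∫₀¹ σ(x,y)² f(y) dy`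
on the Banach space `C([0,1])`. -/
theorem sampled_spectral_radius_tendsto_operator_spectral_radius
    (σ : ℝ → ℝ → ℝ)
    (hσc : ContinuousOn (fun p : ℝ × ℝ => σ p.1 p.2)
      (Set.Icc 0 1 ×ˢ Set.Icc 0 1))
    (hσpos : ∀ x ∈ Set.Icc (0:ℝ) 1, ∀ y ∈ Set.Icc (0:ℝ) 1, 0 < σ x y)
    (V : ∀ n : ℕ, Matrix (Fin n) (Fin n) ℝ)
    (hV : ∀ n : ℕ, ∀ i j : Fin n,
      V n i j = (n : ℝ)⁻¹ * σ (((i : ℕ) + 1) / n) (((j : ℕ) + 1) / n) ^ 2)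
    (T : C(Set.Icc (0:ℝ) 1, ℝ) →L[ℝ] C(Set.Icc (0:ℝ) 1, ℝ))
    (hT : ∀ (f : C(Set.Icc (0:ℝ) 1, ℝ)) (x : Set.Icc (0:ℝ) 1),
      T f x = ∫ y : Set.Icc (0:ℝ) 1, σ (x : ℝ) (y : ℝ) ^ 2 * f y)
    (ρT : ℝ)
    (hρT : Tendsto (fun k : ℕ => ‖T ^ k‖ ^ ((1 : ℝ) / k)) atTop (nhds ρT)) :
    Tendsto (fun n : ℕ => specRad (V n)) atTop (nhds ρT) := by
  have hK : ContinuousOn (fun p : ℝ × ℝ => σ p.1 p.2 ^ 2) (Icc 0 1 ×ˢ Icc 0 1) := hσc.pow 2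
  refine tendsto_of_forall_eventually_one_sub_mul_le_le_one_add_mul fun η hη hη1 => ?_
  obtain ⟨δ, hδ, hclose⟩ :=
    (isCompact_Icc.prod isCompact_Icc).exists_dist_lt_imp_one_sub_mul_le_le_one_add_mul hK
      (fun p hp => pow_pos (hσpos _ hp.1 _ hp.2) 2) hη
  filter_upwards [eventually_ne_atTop 0,
    tendsto_one_div_atTop_nhds_zero_nat.eventually (gt_mem_nhds hδ)] with n hn hnδ
  have : NeZero n := ⟨hn⟩
  refine mul_le_specRad_and_specRad_le_mul (K := fun x y => σ x y ^ 2) (V := V n)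
    (a := 1 - η) (b := 1 + η) hT (fun x y => sq_nonneg _)
    (fun x hx => hK.comp (continuousOn_const.prodMk continuousOn_id) fun y hy => ⟨hx, hy⟩)
    (fun i j => by rw [hV]; positivity) (by linarith) (by linarith)
    (fun i j x hx y hy => ?_) hρT
  have hVij : (n : ℝ) * V n i j = σ ((i + 1) / n) ((j + 1) / n) ^ 2 := by
    rw [hV]; field_simp
  have hdist : dist ((((i : ℕ) + 1) / n : ℝ), (((j : ℕ) + 1) / n : ℝ)) (x, y) < δ := by
    rw [Prod.dist_eq]
    exact max_lt ((dist_le_of_mem_gridCell (right_mem_gridCell n i) hx).trans_lt hnδ)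
      ((dist_le_of_mem_gridCell (right_mem_gridCell n j) hy).trans_lt hnδ)
  rw [hVij]
  exact hclose _ ⟨gridCell_subset_Icc i.2 (right_mem_gridCell n i),
    gridCell_subset_Icc j.2 (right_mem_gridCell n j)⟩ (x, y)
    ⟨gridCell_subset_Icc i.2 hx, gridCell_subset_Icc j.2 hy⟩ hdist
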